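/- arXiv:1707.03814 — 2 statements merged into one kernel-verified Lean document; each statement's English description precedes it below -/
import Mathlib

section
/- Give 𝕊 the localic topology. An open subset U ⊆ 𝕊 is compact if and only if there exist finitely many positive natural numbers n₁, …, n_k such that U = (n₁, …, n_k) = {s ∈ 𝕊 : n_i ∣ s for some i ∈ {1, …, k}} (the empty union giving U = ∅). -/
/-!
The sets `(n)` are closed under finite intersection, `(1) = 𝕊` and `(n) ∩ (m) = (lcm n m)`,
so they form a basis of the localic topology. Every open set containing `n` contains all of its
multiples, so `(n)` is exactly the set of generalizations of the point `n`, and such a set is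
compact: whichever open of a cover contains `n` already covers it. In a space with a basis of
compact opens, the compact opens are exactly the finite unions of basic ones.
-/

open Topology

/-- A supernatural number: a function from the set of primes to `ℕ∞ = ℕ ∪ {∞}`,
thought of as the formal product `∏ p ^ (s p)`. -/
def Supernatural : Type := Nat.Primes → ℕ∞

/-- Divisibility of supernatural numbers: `s ∣ t` iff `s p ≤ t p` for every prime `p`. -/
instance : Dvd Supernatural := ⟨fun s t => ∀ p, s p ≤ t p⟩

/-- The supernatural number associated to a positive natural number,
given by its prime factorization. -/
def natToSuper (n : ℕ+) : Supernatural := fun p => ((n : ℕ).factorization p : ℕ∞)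

/-- The localic topology on `𝕊`, generated by the open sets `(n) = {s : n ∣ s}`
for `n` a positive natural number. -/
def localicTopology : TopologicalSpace Supernatural :=
  .generateFrom {U | ∃ n : ℕ+, U = {s | natToSuper n ∣ s}}

attribute [instance] localicTopology

open TopologicalSpace

theorem isCompact_setOf_specializes {X : Type*} [TopologicalSpace X] (x : X) :
    IsCompact {y | y ⤳ x} := fun _ hf hle =>
  ⟨x, specializes_rfl,
    ClusterPt.of_le_nhds' (hle.trans fun _ hV _ hy => mem_of_mem_nhds (hy hV)) hf⟩

namespace Supernatural

theorem dvd_refl (s : Supernatural) : s ∣ s := fun _ => le_rfl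

theorem dvd_trans {s t u : Supernatural} (hst : s ∣ t) (htu : t ∣ u) : s ∣ u :=
  fun p => (hst p).trans (htu p)

theorem natToSuper_one_dvd (s : Supernatural) : natToSuper 1 ∣ s := fun p => by
  simp [natToSuper]

theorem natToSuper_lcm_apply (n m : ℕ+) (p : Nat.Primes) :
    natToSuper (n.lcm m) p = max (natToSuper n p) (natToSuper m p) := by
  simp only [natToSuper, PNat.lcm_coe, Nat.factorization_lcm n.ne_zero m.ne_zero,
    Finsupp.sup_apply]
  exact Nat.mono_cast.map_max

theorem natToSuper_lcm_dvd_iff {n m : ℕ+} {s : Supernatural} :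
    natToSuper (n.lcm m) ∣ s ↔ natToSuper n ∣ s ∧ natToSuper m ∣ s := by
  simp only [Dvd.dvd, natToSuper_lcm_apply, max_le_iff, forall_and]

/-- The basic open set `(n)` of the localic topology. -/
def multiplesOf (n : ℕ+) : Set Supernatural := {s | natToSuper n ∣ s}

theorem multiplesOf_one : multiplesOf 1 = Set.univ :=
  Set.eq_univ_of_forall natToSuper_one_dvd

theorem multiplesOf_lcm (n m : ℕ+) : multiplesOf (n.lcm m) = multiplesOf n ∩ multiplesOf m :=
  Set.ext fun _ => natToSuper_lcm_dvd_iff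

theorem isTopologicalBasis_multiplesOf : IsTopologicalBasis (Set.range multiplesOf) := by
  refine isTopologicalBasis_of_subbasis_of_finiteInter ?_ ⟨⟨1, multiplesOf_one⟩, ?_⟩
  · exact congrArg generateFrom (Set.ext fun _ => exists_congr fun _ => eq_comm)
  · rintro _ ⟨n, rfl⟩ _ ⟨m, rfl⟩
    exact ⟨n.lcm m, multiplesOf_lcm n m⟩

theorem multiplesOf_eq_setOf_specializes (n : ℕ+) :
    multiplesOf n = {s | s ⤳ natToSuper n} := by
  ext s
  rw [Set.mem_ofPred_eq, specializes_iff_forall_open]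
  constructor
  · intro hns U hU hnU
    obtain ⟨_, ⟨m, rfl⟩, hmn, hmU⟩ :=
      isTopologicalBasis_multiplesOf.exists_subset_of_mem_open hnU hU
    exact hmU (dvd_trans hmn hns)
  · exact fun h => h _ (isTopologicalBasis_multiplesOf.isOpen ⟨n, rfl⟩) (dvd_refl _)

theorem isCompact_multiplesOf (n : ℕ+) : IsCompact (multiplesOf n) :=
  multiplesOf_eq_setOf_specializes n ▸ isCompact_setOf_specializes _

end Supernatural

theorem stmt9 (U : Set Supernatural) (hU : IsOpen U) :
    IsCompact U ↔ ∃ F : Finset ℕ+, U = {s | ∃ n ∈ F, natToSuper n ∣ s} := by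
  have hcompact_open := isCompact_open_iff_eq_finite_iUnion_of_isTopologicalBasis _
    Supernatural.isTopologicalBasis_multiplesOf Supernatural.isCompact_multiplesOf U
  have hunion (F : Finset ℕ+) :
      {s | ∃ n ∈ F, natToSuper n ∣ s} = ⋃ n ∈ (F : Set ℕ+), Supernatural.multiplesOf n := by
    ext; simp [Supernatural.multiplesOf]
  simp only [hU, and_true] at hcompact_open
  rw [hcompact_open]
  constructor
  · rintro ⟨S, hS, rfl⟩
    exact ⟨hS.toFinset, by rw [hunion, hS.coe_toFinset]⟩
  · rintro ⟨F, rfl⟩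
    exact ⟨F, F.finite_toSet, hunion F⟩
end

section
/- Every finite T0 topological space is homeomorphic to a patch of 𝕊: for every finite topological space X satisfying the T0 separation axiom, there exists a topological embedding of X into 𝕊 (with the localic topology) whose image is closed in the patch topology on 𝕊. -/
open Topology

/-- The patch topology on `𝕊`, generated by the subbasis consisting of the sets
`(n) = {s : n ∣ s}` and their complements, for `n` a positive natural number. -/
def patchTopology : TopologicalSpace Supernatural :=
  .generateFrom
    ({U | ∃ n : ℕ+, U = {s | natToSuper n ∣ s}} ∪
     {U | ∃ n : ℕ+, U = {s | natToSuper n ∣ s}ᶜ})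

/-!
A T0 space embeds into the Sierpiński product `Opens X → Prop` via `x ↦ (x ∈ ·)`. Labelling the
open sets injectively by primes turns a point of that product into a squarefree supernatural number,
and this is again an embedding, because the coordinate for the prime `p` is read off as the open set
`(p)`. The range is finite, hence patch-closed, since the sets `(p ^ k)` and their complements
separate points of `𝕊`: the patch topology is Hausdorff.
-/

open TopologicalSpace

namespace Supernatural

lemma isOpen_setOf_natToSuper_dvd (n : ℕ+) : IsOpen {s : Supernatural | natToSuper n ∣ s} :=
  isOpen_generateFrom_of_mem ⟨n, rfl⟩

def primePow (p : Nat.Primes) (k : ℕ) : ℕ+ := ⟨(p : ℕ) ^ k, pow_pos p.2.pos k⟩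

lemma natToSuper_primePow_dvd_iff (p : Nat.Primes) (k : ℕ) (s : Supernatural) :
    natToSuper (primePow p k) ∣ s ↔ (k : ℕ∞) ≤ s p := by
  refine ⟨fun h => by simpa [natToSuper, primePow, p.2.factorization_pow] using h p,
    fun h q => ?_⟩
  obtain rfl | hpq := eq_or_ne p q
  · simpa [natToSuper, primePow, p.2.factorization_pow] using h
  · simp [natToSuper, primePow, p.2.factorization_pow, Subtype.val_injective.ne hpq]

lemma exists_natToSuper_dvd_not_dvd {s t : Supernatural} {p : Nat.Primes} (h : s p < t p) :
    ∃ n : ℕ+, natToSuper n ∣ t ∧ ¬ natToSuper n ∣ s := by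
  obtain ⟨m, hm⟩ := WithTop.ne_top_iff_exists.mp (h.trans_le le_top).ne
  refine ⟨primePow p (m + 1), ?_, ?_⟩ <;>
    simp only [natToSuper_primePow_dvd_iff, Nat.cast_succ,
      ENat.add_one_le_iff (ENat.natCast_ne_top m)]
  · exact hm.trans_lt h
  · rw [← hm]; exact lt_irrefl _

theorem t2Space_patchTopology : @T2Space Supernatural patchTopology := by
  let := patchTopology
  have isOpen_dvd (n : ℕ+) : IsOpen {s : Supernatural | natToSuper n ∣ s} :=
    isOpen_generateFrom_of_mem (Or.inl ⟨n, rfl⟩)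
  have isOpen_not_dvd (n : ℕ+) : IsOpen {s : Supernatural | natToSuper n ∣ s}ᶜ :=
    isOpen_generateFrom_of_mem (Or.inr ⟨n, rfl⟩)
  refine ⟨fun s t hst => ?_⟩
  obtain ⟨p, hp⟩ := Function.ne_iff.mp hst
  rcases hp.lt_or_gt with hlt | hgt
  · obtain ⟨n, ht, hs⟩ := exists_natToSuper_dvd_not_dvd hlt
    exact ⟨_, _, isOpen_not_dvd n, isOpen_dvd n, hs, ht, disjoint_compl_left⟩
  · obtain ⟨n, hs, ht⟩ := exists_natToSuper_dvd_not_dvd hgt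
    exact ⟨_, _, isOpen_dvd n, isOpen_not_dvd n, hs, ht, disjoint_compl_right⟩

theorem continuous_of_isOpen_setOf_le {Y : Type*} [TopologicalSpace Y] {F : Y → Supernatural}
    (hF : ∀ p (k : ℕ), IsOpen {y | (k : ℕ∞) ≤ F y p}) : Continuous F := by
  refine continuous_generateFrom_iff.mpr ?_
  rintro _ ⟨n, rfl⟩
  have hfin : {p : Nat.Primes | (n : ℕ).factorization p ≠ 0}.Finite :=
    Set.Finite.preimage Subtype.val_injective.injOn (n : ℕ).factorization.hasFiniteSupport
  have : F ⁻¹' {s | natToSuper n ∣ s} =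
      ⋂ p ∈ {p : Nat.Primes | (n : ℕ).factorization p ≠ 0}, {y | natToSuper n p ≤ F y p} := by
    ext y
    refine ⟨fun h => Set.mem_iInter₂.mpr fun p _ => h p, fun h p => ?_⟩
    by_cases hp : (n : ℕ).factorization p = 0
    · simp [natToSuper, hp]
    · exact Set.mem_iInter₂.mp h p hp
  rw [this]
  exact hfin.isOpen_biInter fun p _ => hF p _

noncomputable def ofPrimeSet (S : Set Nat.Primes) : Supernatural := S.indicator 1

lemma natCast_le_ofPrimeSet_iff {S : Set Nat.Primes} {p : Nat.Primes} {k : ℕ} :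
    (k : ℕ∞) ≤ ofPrimeSet S p ↔ k = 0 ∨ k = 1 ∧ p ∈ S := by
  by_cases hp : p ∈ S <;> simp [ofPrimeSet, hp]
  omega

lemma one_le_ofPrimeSet_iff {S : Set Nat.Primes} {p : Nat.Primes} :
    1 ≤ ofPrimeSet S p ↔ p ∈ S := by
  simpa using natCast_le_ofPrimeSet_iff (S := S) (p := p) (k := 1)

theorem continuous_ofPrimeSet {Y : Type*} [TopologicalSpace Y] {g : Y → Set Nat.Primes}
    (hg : ∀ p, IsOpen {y | p ∈ g y}) : Continuous fun y => ofPrimeSet (g y) := by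
  refine continuous_of_isOpen_setOf_le fun p k => ?_
  simp only [natCast_le_ofPrimeSet_iff]
  exact isOpen_const.union (isOpen_const.inter (hg p))

theorem exists_isEmbedding_of_countable_opens (X : Type*) [TopologicalSpace X] [T0Space X]
    [Countable (Opens X)] : ∃ f : X → Supernatural, IsEmbedding f := by
  obtain ⟨ι, hι⟩ : ∃ ι : Opens X → Nat.Primes, Function.Injective ι := by
    obtain ⟨e, he⟩ := Countable.exists_injective_nat (Opens X)
    exact ⟨_, (Infinite.natEmbedding Nat.Primes).injective.comp he⟩
  let f (x : X) : Supernatural := ofPrimeSet (ι '' {U | x ∈ U})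
  let g (s : Supernatural) (U : Opens X) : Prop := natToSuper (primePow (ι U) 1) ∣ s
  have hf : Continuous f := continuous_ofPrimeSet fun p => by
    simp only [Set.mem_image, Set.ofPred_exists]
    exact isOpen_iUnion fun U => U.isOpen.inter isOpen_const
  have hg : Continuous g :=
    continuous_pi fun U => continuous_Prop.mpr (isOpen_setOf_natToSuper_dvd _)
  have hgf : g ∘ f = productOfMemOpens X := by
    funext x U
    simp only [Function.comp_apply, f, g, natToSuper_primePow_dvd_iff, Nat.cast_one,
      one_le_ofPrimeSet_iff, hι.mem_set_image]
    rfl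
  exact ⟨f, .of_comp hf hg (hgf ▸ productOfMemOpens_isEmbedding X)⟩

end Supernatural

theorem stmt18 (X : Type*) [TopologicalSpace X] [Finite X] [T0Space X] :
    ∃ f : X → Supernatural, IsEmbedding f ∧ IsClosed[patchTopology] (Set.range f) := by
  obtain ⟨f, hf⟩ := Supernatural.exists_isEmbedding_of_countable_opens X
  have := Supernatural.t2Space_patchTopology
  exact ⟨f, hf, @Set.Finite.isClosed _ patchTopology _ _ (Set.finite_range f)⟩
end
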